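/- arXiv:2110.14631 — 5 statements merged into one kernel-verified Lean document; each statement's English description precedes it below -/
import Mathlib

section
/- For all integers r, m, k with 0 ≤ r ≤ m, m ≥ 1, and k ≥ 1, the Reed–Muller code rates satisfy R(r,m) − R(r,m+k) ≤ (3k + 4)/(5·√m). -/
open MeasureTheory ProbabilityTheory

noncomputable section

/-- The binary entropy function (base 2). -/
def hb (p : ℝ) : ℝ := -(p * Real.logb 2 p) - (1 - p) * Real.logb 2 (1 - p)

/-- Conditional expectation `E[X | W]` of `X` given the σ-algebra generated by `W`. -/
def condMean {Ω β E : Type*} [MeasurableSpace Ω] [MeasurableSpace β]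
    [NormedAddCommGroup E] [NormedSpace ℝ E] [CompleteSpace E]
    (μ : Measure Ω) (X : Ω → E) (W : Ω → β) : Ω → E :=
  μ[X | MeasurableSpace.comap W inferInstance]

/-- Bit-error probability of the MAP decision rule for `X ∈ {±1}` given `W`. -/
def BER {Ω β : Type*} [MeasurableSpace Ω] [MeasurableSpace β]
    (μ : Measure Ω) (X : Ω → ℝ) (W : Ω → β) : ℝ :=
  (1 - ∫ ω, |condMean μ X W ω| ∂μ) / 2

/-- Minimum mean squared error of estimating `X` from `W`. -/
def mmse {Ω β : Type*} [MeasurableSpace Ω] [MeasurableSpace β]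
    (μ : Measure Ω) (X : Ω → ℝ) (W : Ω → β) : ℝ :=
  ∫ ω, (X ω - condMean μ X W ω) ^ 2 ∂μ

/-- Uniform distribution on `{-1, 1} ⊆ ℝ`. -/
def signMeasure : Measure ℝ := (2 : ENNReal)⁻¹ • (Measure.dirac (-1) + Measure.dirac 1)

/-- Capacity of the BMS channel (in multiplicative-noise form) with noise law `PZ`:
`C = 1 - E[h_b((1 + E[X_u | Y_u])/2)]` where `X_u` is uniform on `{±1}`, independent of
`Z₀ ~ PZ`, and `Y_u = X_u · Z₀`. -/
def capacity (PZ : Measure ℝ) : ℝ :=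
  1 - ∫ p, hb ((1 + condMean (signMeasure.prod PZ)
        (fun q : ℝ × ℝ => q.1) (fun q : ℝ × ℝ => q.1 * q.2) p) / 2) ∂(signMeasure.prod PZ)

/-- Evaluation vector of the multilinear polynomial whose coefficients on monomials
of degree at most `r` are given by `α` (higher-degree coefficients being ignored),
evaluated at the point `v ∈ 𝔽₂^m` with index `i = Σ_j v_j 2^j`. -/
def RMword (r m : ℕ) (α : Finset (Fin m) → ZMod 2) : Fin (2 ^ m) → ZMod 2 :=
  fun i => ∑ S ∈ Finset.univ.filter (fun S : Finset (Fin m) => S.card ≤ r),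
    α S * ∏ j ∈ S, ((((i : ℕ) / 2 ^ (j : ℕ)) % 2 : ℕ) : ZMod 2)

/-- The Reed–Muller code RM(r, m) ⊆ 𝔽₂^{2^m}. -/
def RMcode (r m : ℕ) : Finset (Fin (2 ^ m) → ZMod 2) :=
  Finset.image (RMword r m) Finset.univ

/-- The rate `R(r,m)` of RM(r,m). -/
def RMrate (r m : ℕ) : ℝ := (2 ^ m : ℝ)⁻¹ * ∑ i ∈ Finset.range (r + 1), (m.choose i : ℝ)

/-- BPSK modulation map `c ↦ ((-1)^{c_0}, …, (-1)^{c_{N-1}})`. -/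
def bpsk {N : ℕ} (c : Fin N → ZMod 2) : Fin N → ℝ := fun i => (-1 : ℝ) ^ ((c i).val)

/-- BPSK image of a binary code. -/
def bpskImage {N : ℕ} (C : Finset (Fin N → ZMod 2)) : Finset (Fin N → ℝ) :=
  letI := Classical.decEq (Fin N → ℝ)
  C.image bpsk

/-- BPSK image of RM(r,m). -/
def bpskRM (r m : ℕ) : Finset (Fin (2 ^ m) → ℝ) := bpskImage (RMcode r m)

/-- Uniform probability measure on a finite set. -/
def uniformOnFinset {α : Type*} [MeasurableSpace α] (s : Finset α) : Measure α :=
  (s.card : ENNReal)⁻¹ • ∑ x ∈ s, Measure.dirac x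

/-- `ρ(m) = (6 ln m + 34)/(5 √m)`. -/
def rho (m : ℕ) : ℝ := (6 * Real.log m + 34) / (5 * Real.sqrt m)

/-- Inverse of the binary entropy function restricted to `[0, 1/2]`. -/
def hbInv (u : ℝ) : ℝ := sSup {p : ℝ | p ∈ Set.Icc (0 : ℝ) (1 / 2) ∧ hb p ≤ u}

/-- `ψ(u) = 1 - (1 - 2 h_b^{-1}(u))²`. -/
def psi (u : ℝ) : ℝ := 1 - (1 - 2 * hbInv u) ^ 2

/-- `Ψ(u) = ∫₀^u ψ(v) dv`. -/
def PsiInt (u : ℝ) : ℝ := ∫ v in (0 : ℝ)..u, psi v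

/-- The coefficients `c_k = 1/(ln 2 · 2k (2k-1))`. -/
def ck (k : ℕ) : ℝ := 1 / (Real.log 2 * (2 * k) * (2 * k - 1))

/-- The channel moments `q_k = E[(E[X_u | Y_u])^{2k}]` for uniform input. -/
def qmom (PZ : Measure ℝ) (k : ℕ) : ℝ :=
  ∫ p, (condMean (signMeasure.prod PZ)
      (fun q : ℝ × ℝ => q.1) (fun q : ℝ × ℝ => q.1 * q.2) p) ^ (2 * k) ∂(signMeasure.prod PZ)

end


section auxStmt5

lemma aux_cb (n : ℕ) : (Nat.centralBinom n)^2 * (2*n+1) ≤ 16^n := by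
  induction n with
  | zero => simp [Nat.centralBinom]
  | succ n ih =>
    have key := Nat.succ_mul_centralBinom_succ n
    have h1 : (Nat.centralBinom (n+1))^2 * (2*(n+1)+1) * (n+1)^2 ≤ 16^(n+1) * (n+1)^2 := by
      calc (Nat.centralBinom (n+1))^2 * (2*(n+1)+1) * (n+1)^2
          = ((n+1) * Nat.centralBinom (n+1))^2 * (2*n+3) := by ring
        _ = (2*(2*n+1)*Nat.centralBinom n)^2 * (2*n+3) := by rw [key]
        _ = (4 * ((2*n+1)*(2*n+3))) * ((Nat.centralBinom n)^2 * (2*n+1)) := by ring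
        _ ≤ (4 * ((2*n+2)^2)) * 16^n := by
            apply Nat.mul_le_mul
            · apply Nat.mul_le_mul_left; nlinarith
            · exact ih
        _ = 16^(n+1) * (n+1)^2 := by ring
    exact Nat.le_of_mul_le_mul_right h1 (by positivity)

lemma aux_mid (m : ℕ) : (m.choose (m/2))^2 * m ≤ 4^m := by
  rcases Nat.even_or_odd m with ⟨n, hn⟩ | ⟨n, hn⟩
  · subst hn
    have h2 : (n+n)/2 = n := by omega
    rw [h2]
    have h := aux_cb n
    have hcb : Nat.centralBinom n = (n+n).choose n := by
      rw [Nat.centralBinom]; ring_nf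
    rw [hcb] at h
    calc ((n+n).choose n)^2 * (n+n) ≤ ((n+n).choose n)^2 * (2*n+1) := by
          apply Nat.mul_le_mul_left; omega
      _ ≤ 16^n := h
      _ = 4^(n+n) := by rw [show (16:ℕ) = 4^2 from rfl, ← pow_mul]; ring_nf
  · subst hn
    have h2 : (2*n+1)/2 = n := by omega
    rw [h2]
    have h := aux_cb (n+1)
    have hcb : Nat.centralBinom (n+1) = 2 * ((2*n+1).choose n) := by
      rw [Nat.centralBinom]
      have : 2*(n+1) = (2*n+1) + 1 := by ring
      rw [this, Nat.choose_succ_succ]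
      have hsymm : (2*n+1).choose (n+1) = (2*n+1).choose n := by
        have he : (2*n+1) - n = n+1 := by omega
        rw [← he, Nat.choose_symm (by omega)]
      simp only [Nat.succ_eq_add_one] at *
      omega
    rw [hcb] at h
    have h3 : 4 * (((2*n+1).choose n)^2 * (2*n+1)) ≤ 4 * 4^(2*n+1) := by
      calc 4 * (((2*n+1).choose n)^2 * (2*n+1))
          ≤ (2 * ((2*n+1).choose n))^2 * (2*(n+1)+1) := by nlinarith
        _ ≤ 16^(n+1) := h
        _ = 4 * 4^(2*n+1) := by
            rw [show (16:ℕ) = 4^2 from rfl, ← pow_mul]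
            rw [show 2*(n+1) = (2*n+1)+1 by ring, pow_succ]; ring
    exact Nat.le_of_mul_le_mul_left h3 (by norm_num)

lemma aux_choose_real (r m : ℕ) (hm : 1 ≤ m) :
    (m.choose r : ℝ) * Real.sqrt m ≤ 2^m := by
  have h1 : (m.choose r : ℝ) ≤ m.choose (m/2) := by exact_mod_cast Nat.choose_le_middle r m
  have hmpos : (0:ℝ) < m := by exact_mod_cast hm
  have hsq : ((m.choose (m/2) : ℝ))^2 * m ≤ (4:ℝ)^m := by exact_mod_cast aux_mid m
  have key : ((m.choose (m/2) : ℝ) * Real.sqrt m)^2 ≤ ((2:ℝ)^m)^2 := by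
    calc ((m.choose (m/2):ℝ) * Real.sqrt m)^2
        = ((m.choose (m/2):ℝ))^2 * (Real.sqrt m)^2 := by ring
      _ = ((m.choose (m/2):ℝ))^2 * m := by rw [Real.sq_sqrt hmpos.le]
      _ ≤ (4:ℝ)^m := hsq
      _ = ((2:ℝ)^m)^2 := by rw [← pow_mul, show (4:ℝ) = 2^2 by norm_num, ← pow_mul]; ring_nf
  have ha : (0:ℝ) ≤ (m.choose (m/2):ℝ) * Real.sqrt m := by positivity
  have hb : (0:ℝ) ≤ (2:ℝ)^m := by positivity
  have h2 : (m.choose (m/2):ℝ) * Real.sqrt m ≤ 2^m := by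
    nlinarith
  calc (m.choose r : ℝ) * Real.sqrt m ≤ (m.choose (m/2):ℝ) * Real.sqrt m := by
        apply mul_le_mul_of_nonneg_right h1 (Real.sqrt_nonneg _)
    _ ≤ 2^m := h2

lemma aux_sum (m r : ℕ) :
    ∑ i ∈ Finset.range (r+1), (m+1).choose i + m.choose r
      = 2 * ∑ i ∈ Finset.range (r+1), m.choose i := by
  induction r with
  | zero => simp
  | succ r ih =>
    rw [Finset.sum_range_succ, Finset.sum_range_succ (f := fun i => m.choose i),
      Nat.choose_succ_succ]
    simp only [Nat.succ_eq_add_one] at *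
    omega


lemma aux_rate_step (r m : ℕ) :
    RMrate r m - RMrate r (m+1) = (m.choose r : ℝ) / 2^(m+1) := by
  have h : (∑ i ∈ Finset.range (r+1), ((m+1).choose i : ℝ))
      = 2 * (∑ i ∈ Finset.range (r+1), (m.choose i : ℝ)) - (m.choose r : ℝ) := by
    have := congrArg (Nat.cast : ℕ → ℝ) (aux_sum m r)
    push_cast at this
    linarith
  unfold RMrate
  rw [h, pow_succ]
  have h2 : (2:ℝ)^m ≠ 0 := by positivity
  field_simp
  ring

lemma aux_step_bound (r m : ℕ) (hm : 1 ≤ m) :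
    RMrate r m - RMrate r (m+1) ≤ 1 / (2 * Real.sqrt m) := by
  rw [aux_rate_step]
  have h := aux_choose_real r m hm
  have hs : 0 < Real.sqrt m := Real.sqrt_pos.mpr (by exact_mod_cast hm)
  rw [div_le_div_iff₀ (by positivity) (by positivity)]
  calc (m.choose r : ℝ) * (2 * Real.sqrt m) = 2 * ((m.choose r:ℝ) * Real.sqrt m) := by ring
    _ ≤ 2 * 2^m := by linarith
    _ = 1 * 2^(m+1) := by rw [pow_succ]; ring

lemma aux_tel (r m : ℕ) (hm : 1 ≤ m) (k : ℕ) :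
    RMrate r m - RMrate r (m+k) ≤ k / (2 * Real.sqrt m) := by
  induction k with
  | zero => simp
  | succ k ih =>
    have h1 := aux_step_bound r (m+k) (by omega)
    have hs : 0 < Real.sqrt m := Real.sqrt_pos.mpr (by exact_mod_cast hm)
    have h2 : Real.sqrt m ≤ Real.sqrt ((m:ℝ)+k) := Real.sqrt_le_sqrt (by
      have : (0:ℝ) ≤ k := by positivity
      linarith)
    have h3 : 1 / (2 * Real.sqrt ((m+k:ℕ):ℝ)) ≤ 1 / (2 * Real.sqrt m) := by
      push_cast
      apply one_div_le_one_div_of_le (by positivity) (by linarith)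
    have heq : RMrate r (m+(k+1)) = RMrate r ((m+k)+1) := by rw [add_assoc]
    push_cast
    rw [heq]
    have hsplit : ((k:ℝ)+1)/(2*Real.sqrt m) = (k:ℝ)/(2*Real.sqrt m) + 1/(2*Real.sqrt m) := by
      ring
    rw [hsplit]
    linarith

end auxStmt5

/-- RM rate change bound: for `0 ≤ r ≤ m`, `m ≥ 1`, `k ≥ 1`,
`R(r,m) − R(r,m+k) ≤ (3k+4)/(5√m)`. -/
theorem stmt_5 (r m k : ℕ) (hrm : r ≤ m) (hm : 1 ≤ m) (hk : 1 ≤ k) :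
    RMrate r m - RMrate r (m + k) ≤ (3 * (k : ℝ) + 4) / (5 * Real.sqrt m) := by
  have h := aux_tel r m hm k
  have hs : 0 < Real.sqrt m := Real.sqrt_pos.mpr (by exact_mod_cast hm)
  have hk' : (1:ℝ) ≤ k := by exact_mod_cast hk
  have h2 : (k:ℝ) / (2 * Real.sqrt m) ≤ (3 * (k:ℝ) + 4) / (5 * Real.sqrt m) := by
    rw [div_le_div_iff₀ (by positivity) (by positivity)]
    nlinarith
  linarith
end

section
/- Fix integers r, m, k with 0 ≤ r ≤ m and 1 ≤ k ≤ m, and let C = RM(r, m+k) ⊆ 𝔽₂^{2^{m+k}}. Then there exist subsets A, B, C' of {0,…,2^{m+k}−1} such that, setting I = {0} ∪ A ∪ B and I' = {0} ∪ A ∪ C', the following hold: I = {0,1,…,2^m − 1}; the punctured codes satisfy C_I = RM(r,m) and C_{I'} = RM(r,m) (coordinates taken in increasing index order, identifying indices with points of 𝔽₂^m via binary expansion); I ∩ I' = {0} ∪ A has cardinality 2^{m−k}; C_{I ∩ I'} = RM(r, m−k); and if X is uniformly distributed on C then X_I and X_{I'} are each uniformly distributed on RM(r,m). -/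
open MeasureTheory ProbabilityTheory

instance : MeasurableSpace (ZMod 2) := ⊤

/-- Puncture a length-`L` code to the coordinates in `I` (of cardinality `n`),
taken in increasing index order. -/
noncomputable def punctSet {L : ℕ} (C : Finset (Fin L → ZMod 2)) {n : ℕ}
    (I : Finset (Fin L)) (h : I.card = n) : Finset (Fin n → ZMod 2) :=
  C.image (fun c => fun j : Fin n => c (I.orderIsoOfFin h j).1)

/-!
Let `Nat.spreadBits a b` insert `b - a` zero bits at position `a` of a binary expansion. It is
strictly increasing with image `{x | x % 2 ^ b < 2 ^ a}`, so it enumerates that set in increasing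
order. At a spread point the monomial `∏ t ∈ S, v t` vanishes unless `S` avoids the inserted
positions, and then it is a monomial of the same degree in the remaining variables; hence
puncturing RM(r, N) to such a set gives RM(r, n). The sets `[0, 2 ^ m)`,
`{x | x % 2 ^ m < 2 ^ (m - k)}` and their intersection `[0, 2 ^ (m - k))` are of this form.
For the distributions: puncturing is linear, and a homomorphism out of a finite group pushes the
uniform measure forward to the uniform measure on its image, because all its fibres are cosets of
the kernel.
-/

open Finset

theorem Finset.insert_erase_inter_union_sdiff {α : Type*} [DecidableEq α] {s t : Finset α}
    {a : α} (ha : a ∈ s ∩ t) : insert a ((s ∩ t).erase a ∪ s \ t) = s := by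
  rw [← insert_union, insert_erase ha, union_comm, sdiff_union_inter]

theorem Nat.lt_and_mod_lt_iff {x d M : ℕ} (hdM : d ≤ M) : x < M ∧ x % M < d ↔ x < d := by
  constructor
  · rintro ⟨hx, hxd⟩
    rwa [mod_eq_of_lt hx] at hxd
  · intro hx
    exact ⟨hx.trans_le hdM, by rwa [mod_eq_of_lt (hx.trans_le hdM)]⟩

namespace Nat

/-- Inserts `b - a` zero bits at position `a` into the binary expansion of `i`. -/
def spreadBits (a b i : ℕ) : ℕ := 2 ^ b * (i / 2 ^ a) + i % 2 ^ a

variable {a b : ℕ}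

theorem testBit_spreadBits (hab : a ≤ b) (i t : ℕ) :
    (spreadBits a b i).testBit t =
      if t < b then decide (t < a) && i.testBit t else i.testBit (t - b + a) := by
  have hlow : i % 2 ^ a < 2 ^ b :=
    (mod_lt _ (Nat.two_pow_pos a)).trans_le (pow_le_pow_right₀ one_le_two hab)
  rw [spreadBits, testBit_two_pow_mul_add _ hlow, testBit_mod_two_pow, testBit_div_two_pow]

theorem spreadBits_strictMono (hab : a ≤ b) : StrictMono (spreadBits a b) := by
  intro i j hij
  have hq : i / 2 ^ a ≤ j / 2 ^ a := Nat.div_le_div_right hij.le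
  have hri : i % 2 ^ a < 2 ^ a := mod_lt _ (Nat.two_pow_pos a)
  have hrj : j % 2 ^ a < 2 ^ a := mod_lt _ (Nat.two_pow_pos a)
  have hab' : 2 ^ a ≤ 2 ^ b := pow_le_pow_right₀ one_le_two hab
  unfold spreadBits
  rcases hq.lt_or_eq with hq | hq
  · have := Nat.mul_le_mul_left (2 ^ b) (show i / 2 ^ a + 1 ≤ j / 2 ^ a by omega)
    rw [Nat.mul_add] at this
    omega
  · have := div_add_mod i (2 ^ a)
    have := div_add_mod j (2 ^ a)
    rw [hq] at *
    omega

theorem spreadBits_mod (hab : a ≤ b) (i : ℕ) : spreadBits a b i % 2 ^ b = i % 2 ^ a := by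
  rw [spreadBits, mul_add_mod, mod_eq_of_lt]
  exact (mod_lt _ (Nat.two_pow_pos a)).trans_le (pow_le_pow_right₀ one_le_two hab)

theorem spreadBits_spreadBits {x : ℕ} (hx : x % 2 ^ b < 2 ^ a) :
    spreadBits a b (spreadBits b a x) = x := by
  rw [spreadBits, spreadBits, mul_add_div (Nat.two_pow_pos a), mul_add_mod, div_eq_of_lt hx,
    mod_eq_of_lt hx, add_zero, div_add_mod]

variable {n N : ℕ}

theorem spreadBits_lt (hab : a ≤ b) (hn : n + b = N + a) {i : ℕ} (hi : i < 2 ^ n) :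
    spreadBits a b i < 2 ^ N := by
  refine lt_pow_two_of_testBit _ fun t ht => ?_
  rw [testBit_spreadBits hab]
  have hbit : ∀ s, n ≤ s → i.testBit s = false := fun s hs =>
    testBit_lt_two_pow (hi.trans_le (pow_le_pow_right₀ one_le_two hs))
  split_ifs
  · simp [hbit t (by omega)]
  · exact hbit _ (by omega)

theorem spreadBits_spreadBits_lt (hbN : b ≤ N) (hn : n + b = N + a) {x : ℕ} (hx : x < 2 ^ N)
    (hxb : x % 2 ^ b < 2 ^ a) : spreadBits b a x < 2 ^ n := by
  have hq : x / 2 ^ b < 2 ^ (N - b) := by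
    rw [div_lt_iff_lt_mul (Nat.two_pow_pos b), ← pow_add, Nat.sub_add_cancel hbN]
    exact hx
  have := Nat.mul_le_mul_left (2 ^ a) (show x / 2 ^ b + 1 ≤ 2 ^ (N - b) by omega)
  rw [← pow_add, show a + (N - b) = n by omega, Nat.mul_add] at this
  unfold spreadBits
  omega

end Nat

theorem map_uniformOnFinset_univ {G H : Type*} [AddGroup G] [Fintype G] [MeasurableSpace G]
    [AddMonoid H] [DecidableEq H] [MeasurableSpace H] (f : G →+ H) (hf : Measurable f) :
    (uniformOnFinset (univ : Finset G)).map f = uniformOnFinset (univ.image f) := by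
  set c := #{g | f g = f 0}
  have hmaps : Set.MapsTo f (univ : Finset G) (univ.image f) :=
    fun g _ => mem_image_of_mem f (mem_univ g)
  -- the fibres of a homomorphism are cosets of its kernel
  have hfib : ∀ h ∈ univ.image f, #{g | f g = h} = c := by
    intro h hh
    obtain ⟨g, -, rfl⟩ := mem_image.mp hh
    exact AddMonoidHom.card_fiber_eq_of_mem_range f ⟨g, rfl⟩ ⟨0, rfl⟩
  have hcard : #(univ : Finset G) = #(univ.image f) * c := by
    rw [card_eq_sum_card_fiberwise hmaps, sum_congr rfl hfib, sum_const, smul_eq_mul]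
  have hc : (c : ENNReal) ≠ 0 := by exact_mod_cast (card_pos.mpr ⟨0, by simp⟩).ne'
  have hsum :
      ∑ g, Measure.dirac (f g) = (c : ENNReal) • ∑ h ∈ univ.image f, Measure.dirac h := by
    rw [← sum_fiberwise_of_maps_to hmaps, smul_sum]
    refine sum_congr rfl fun h hh => ?_
    rw [sum_congr rfl fun g hg => by rw [(mem_filter.mp hg).2], sum_const, hfib h hh,
      Nat.cast_smul_eq_nsmul]
  unfold uniformOnFinset
  simp_rw [Measure.map_smul, Measure.map_finset_sum hf.aemeasurable, Measure.map_dirac' hf]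
  rw [hsum, smul_smul, hcard, Nat.cast_mul, ENNReal.mul_inv (by simp) (by simp), mul_assoc,
    ENNReal.inv_mul_cancel hc (by simp), mul_one]

namespace ReedMuller

open Nat

variable {a b n N : ℕ}

/-- The map on bit positions induced by `Nat.spreadBits a b`. -/
def bitShift (hab : a ≤ b) (hn : n + b = N + a) : Fin n ↪ Fin N where
  toFun j := ⟨if (j : ℕ) < a then j else j - a + b, by split_ifs <;> omega⟩
  inj' i j hij := by
    simp only [Fin.mk.injEq] at hij
    ext
    split_ifs at hij <;> omega

@[simp]
theorem val_bitShift (hab : a ≤ b) (hn : n + b = N + a) (j : Fin n) :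
    (bitShift hab hn j : ℕ) = if (j : ℕ) < a then (j : ℕ) else j - a + b := rfl

def spreadBitsEmb (hab : a ≤ b) (hn : n + b = N + a) : Fin (2 ^ n) ↪o Fin (2 ^ N) :=
  OrderEmbedding.ofStrictMono (fun i => ⟨spreadBits a b i, spreadBits_lt hab hn i.2⟩)
    fun _ _ hij => spreadBits_strictMono hab hij

@[simp]
theorem val_spreadBitsEmb (hab : a ≤ b) (hn : n + b = N + a) (i : Fin (2 ^ n)) :
    (spreadBitsEmb hab hn i : ℕ) = spreadBits a b i := rfl

theorem testBit_spreadBits_bitShift (hab : a ≤ b) (hn : n + b = N + a) (i : ℕ) (j : Fin n) :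
    (spreadBits a b i).testBit (bitShift hab hn j) = i.testBit j := by
  rw [val_bitShift, testBit_spreadBits hab]
  by_cases hj : (j : ℕ) < a
  · simp [hj, hj.trans_le hab]
  · rw [if_neg hj, if_neg (by omega)]
    congr 1
    omega

theorem testBit_spreadBits_of_notMem_range (hab : a ≤ b) (hn : n + b = N + a) {i : ℕ}
    (hi : i < 2 ^ n) {t : Fin N} (ht : t ∉ Set.range (bitShift hab hn)) :
    (spreadBits a b i).testBit t = false := by
  have hlt : ∀ s, i.testBit s = true → s < n := fun s hs =>
    (Nat.pow_lt_pow_iff_right one_lt_two).mp ((ge_two_pow_of_testBit hs).trans_lt hi)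
  refine Bool.eq_false_iff.mpr fun hbit => ht ?_
  rw [testBit_spreadBits hab] at hbit
  split_ifs at hbit with htb
  · simp only [Bool.and_eq_true, decide_eq_true_eq] at hbit
    exact ⟨⟨t, hlt t hbit.2⟩, Fin.ext (by simp [hbit.1])⟩
  · have := hlt _ hbit
    exact ⟨⟨t - b + a, this⟩, Fin.ext (by simp only [val_bitShift]; split_ifs <;> omega)⟩

theorem eq_map_spreadBitsEmb (hab : a ≤ b) (hbN : b ≤ N) (hn : n + b = N + a)
    {I : Finset (Fin (2 ^ N))} (hI : ∀ x, x ∈ I ↔ (x : ℕ) % 2 ^ b < 2 ^ a) :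
    I = univ.map (spreadBitsEmb hab hn).toEmbedding := by
  ext x
  rw [hI, mem_map]
  constructor
  · intro hx
    exact ⟨⟨spreadBits b a x, spreadBits_spreadBits_lt hbN hn x.2 hx⟩, mem_univ _,
      Fin.ext (spreadBits_spreadBits hx)⟩
  · rintro ⟨i, -, rfl⟩
    simpa [spreadBits_mod hab] using mod_lt _ (Nat.two_pow_pos a)

theorem card_eq_of_mem_iff (hab : a ≤ b) (hbN : b ≤ N) (hn : n + b = N + a)
    {I : Finset (Fin (2 ^ N))} (hI : ∀ x, x ∈ I ↔ (x : ℕ) % 2 ^ b < 2 ^ a) :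
    I.card = 2 ^ n := by
  rw [eq_map_spreadBitsEmb hab hbN hn hI, card_map, Finset.card_univ, Fintype.card_fin]

theorem orderIsoOfFin_eq_spreadBitsEmb (hab : a ≤ b) (hbN : b ≤ N) (hn : n + b = N + a)
    {I : Finset (Fin (2 ^ N))} (hI : ∀ x, x ∈ I ↔ (x : ℕ) % 2 ^ b < 2 ^ a)
    (h : I.card = 2 ^ n) (j : Fin (2 ^ n)) :
    (I.orderIsoOfFin h j : Fin (2 ^ N)) = spreadBitsEmb hab hn j := by
  have hmem : ∀ j, spreadBitsEmb hab hn j ∈ I := fun j => by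
    rw [eq_map_spreadBitsEmb hab hbN hn hI]
    exact mem_map_of_mem _ (mem_univ j)
  rw [coe_orderIsoOfFin_apply, ← orderEmbOfFin_unique' h hmem]

def SpreadsBitsAlong (e : Fin n ↪ Fin N) (E : Fin (2 ^ n) → Fin (2 ^ N)) : Prop :=
  (∀ i j, (E i : ℕ).testBit (e j) = (i : ℕ).testBit j) ∧
    ∀ i t, t ∉ Set.range e → (E i : ℕ).testBit t = false

theorem spreadsBitsAlong_spreadBitsEmb (hab : a ≤ b) (hn : n + b = N + a) :
    SpreadsBitsAlong (bitShift hab hn) (spreadBitsEmb hab hn) :=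
  ⟨fun i j => testBit_spreadBits_bitShift hab hn i j,
    fun i _ ht => testBit_spreadBits_of_notMem_range hab hn i.2 ht⟩

theorem RMword_comp_of_spreadsBitsAlong (r : ℕ) {e : Fin n ↪ Fin N}
    {E : Fin (2 ^ n) → Fin (2 ^ N)} (hE : SpreadsBitsAlong e E) (α : Finset (Fin N) → ZMod 2) :
    RMword r N α ∘ E = RMword r n (fun T => α (T.map e)) := by
  funext i
  simp only [Function.comp_apply, RMword, ← Nat.toNat_testBit]
  rw [← sum_subset
      (s₁ := ({T | T.card ≤ r} : Finset (Finset (Fin n))).map (mapEmbedding e).toEmbedding),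
    sum_map]
  · refine sum_congr rfl fun T _ => ?_
    simp [prod_map, hE.1]
  · intro S hS
    obtain ⟨T, hT, rfl⟩ := mem_map.mp hS
    simpa using hT
  · intro S hS hS'
    obtain ⟨t, ht, hte⟩ : ∃ t ∈ S, t ∉ Set.range e := by
      by_contra! h
      obtain ⟨T, -, rfl⟩ := (subset_map_iff (t := univ)).mp fun t ht => by simpa using h t ht
      exact hS' (mem_map_of_mem _ (by simpa using hS))
    rw [prod_eq_zero ht (by simp [hE.2 i t hte]), mul_zero]

theorem image_comp_RMcode (r : ℕ) {e : Fin n ↪ Fin N} {E : Fin (2 ^ n) → Fin (2 ^ N)}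
    (hE : SpreadsBitsAlong e E) : (RMcode r N).image (· ∘ E) = RMcode r n := by
  have hsurj : Function.Surjective
      fun (α : Finset (Fin N) → ZMod 2) (T : Finset (Fin n)) => α (T.map e) :=
    (map_injective e).surjective_comp_right
  have hcomp : (· ∘ E) ∘ RMword r N = RMword r n ∘ _ :=
    funext (RMword_comp_of_spreadsBitsAlong r hE)
  rw [RMcode, RMcode, image_image, hcomp, ← image_image, image_univ_of_surjective hsurj]

def RMwordHom (r m : ℕ) : (Finset (Fin m) → ZMod 2) →+ (Fin (2 ^ m) → ZMod 2) where
  toFun := RMword r m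
  map_zero' := by
    funext i
    simp [RMword]
  map_add' α β := by
    funext i
    simp [RMword, add_mul, sum_add_distrib]

theorem map_comp_uniformOnFinset_RMcode (r : ℕ) {e : Fin n ↪ Fin N}
    {E : Fin (2 ^ n) → Fin (2 ^ N)} (hE : SpreadsBitsAlong e E) :
    (uniformOnFinset (RMcode r N)).map (· ∘ E) = uniformOnFinset (RMcode r n) := by
  have hRM : ∀ m, uniformOnFinset (RMcode r m) = (uniformOnFinset univ).map (RMwordHom r m) :=
    fun m => (map_uniformOnFinset_univ (RMwordHom r m) Measurable.of_discrete).symm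
  rw [hRM N, Measure.map_map Measurable.of_discrete Measurable.of_discrete,
    ← image_comp_RMcode r hE, RMcode, image_image]
  exact map_uniformOnFinset_univ
    ((LinearMap.funLeft (ZMod 2) (ZMod 2) E).toAddMonoidHom.comp (RMwordHom r N))
    Measurable.of_discrete

theorem puncture_eq_comp_spreadBitsEmb (hab : a ≤ b) (hbN : b ≤ N) (hn : n + b = N + a)
    {I : Finset (Fin (2 ^ N))} (hI : ∀ x, x ∈ I ↔ (x : ℕ) % 2 ^ b < 2 ^ a)
    (h : I.card = 2 ^ n) :
    (fun (c : Fin (2 ^ N) → ZMod 2) (j : Fin (2 ^ n)) => c (I.orderIsoOfFin h j).1) =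
      (· ∘ spreadBitsEmb hab hn) := by
  funext c j
  simp [orderIsoOfFin_eq_spreadBitsEmb hab hbN hn hI h]

theorem punctSet_RMcode_of_mem_iff (r : ℕ) (hab : a ≤ b) (hbN : b ≤ N) (hn : n + b = N + a)
    {I : Finset (Fin (2 ^ N))} (hI : ∀ x, x ∈ I ↔ (x : ℕ) % 2 ^ b < 2 ^ a)
    (h : I.card = 2 ^ n) :
    punctSet (RMcode r N) I h = RMcode r n := by
  rw [punctSet, puncture_eq_comp_spreadBitsEmb hab hbN hn hI h]
  exact image_comp_RMcode r (spreadsBitsAlong_spreadBitsEmb hab hn)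

theorem map_puncture_uniformOnFinset_RMcode_of_mem_iff (r : ℕ) (hab : a ≤ b) (hbN : b ≤ N)
    (hn : n + b = N + a) {I : Finset (Fin (2 ^ N))}
    (hI : ∀ x, x ∈ I ↔ (x : ℕ) % 2 ^ b < 2 ^ a) (h : I.card = 2 ^ n) :
    (uniformOnFinset (RMcode r N)).map
        (fun (c : Fin (2 ^ N) → ZMod 2) (j : Fin (2 ^ n)) => c (I.orderIsoOfFin h j).1) =
      uniformOnFinset (RMcode r n) := by
  rw [puncture_eq_comp_spreadBitsEmb hab hbN hn hI h]
  exact map_comp_uniformOnFinset_RMcode r (spreadsBitsAlong_spreadBitsEmb hab hn)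

end ReedMuller

open ReedMuller

theorem stmt_7_general (r m k : ℕ) (hkm : k ≤ m) :
    ∃ (A B C' : Finset (Fin (2 ^ (m + k))))
      (hI : (insert (0 : Fin (2 ^ (m + k))) (A ∪ B)).card = 2 ^ m)
      (hI' : (insert (0 : Fin (2 ^ (m + k))) (A ∪ C')).card = 2 ^ m)
      (hT : ((insert (0 : Fin (2 ^ (m + k))) (A ∪ B))
              ∩ (insert (0 : Fin (2 ^ (m + k))) (A ∪ C'))).card = 2 ^ (m - k)),
      (∀ x : Fin (2 ^ (m + k)),
          x ∈ insert (0 : Fin (2 ^ (m + k))) (A ∪ B) ↔ (x : ℕ) < 2 ^ m)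
      ∧ punctSet (RMcode r (m + k)) (insert (0 : Fin (2 ^ (m + k))) (A ∪ B)) hI
          = RMcode r m
      ∧ punctSet (RMcode r (m + k)) (insert (0 : Fin (2 ^ (m + k))) (A ∪ C')) hI'
          = RMcode r m
      ∧ (insert (0 : Fin (2 ^ (m + k))) (A ∪ B))
            ∩ (insert (0 : Fin (2 ^ (m + k))) (A ∪ C'))
          = insert (0 : Fin (2 ^ (m + k))) A
      ∧ punctSet (RMcode r (m + k))
            ((insert (0 : Fin (2 ^ (m + k))) (A ∪ B))
              ∩ (insert (0 : Fin (2 ^ (m + k))) (A ∪ C'))) hT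
          = RMcode r (m - k)
      ∧ Measure.map
            (fun c : Fin (2 ^ (m + k)) → ZMod 2 => fun j : Fin (2 ^ m) =>
              c (((insert (0 : Fin (2 ^ (m + k))) (A ∪ B)).orderIsoOfFin hI j).1))
            (uniformOnFinset (RMcode r (m + k)))
          = uniformOnFinset (RMcode r m)
      ∧ Measure.map
            (fun c : Fin (2 ^ (m + k)) → ZMod 2 => fun j : Fin (2 ^ m) =>
              c (((insert (0 : Fin (2 ^ (m + k))) (A ∪ C')).orderIsoOfFin hI' j).1))
            (uniformOnFinset (RMcode r (m + k)))
          = uniformOnFinset (RMcode r m) := by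
  let I : Finset (Fin (2 ^ (m + k))) := {x | (x : ℕ) % 2 ^ (m + k) < 2 ^ m}
  let I' : Finset (Fin (2 ^ (m + k))) := {x | (x : ℕ) % 2 ^ m < 2 ^ (m - k)}
  have hI : ∀ x, x ∈ I ↔ (x : ℕ) % 2 ^ (m + k) < 2 ^ m := by simp [I]
  have hI' : ∀ x, x ∈ I' ↔ (x : ℕ) % 2 ^ m < 2 ^ (m - k) := by simp [I']
  have hII' : ∀ x, x ∈ I ∩ I' ↔ (x : ℕ) % 2 ^ (m + k) < 2 ^ (m - k) := fun x => by
    rw [mem_inter, hI, hI', Nat.mod_eq_of_lt x.2,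
      Nat.lt_and_mod_lt_iff (pow_le_pow_right₀ one_le_two (Nat.sub_le m k))]
  have h0 : (0 : Fin (2 ^ (m + k))) ∈ I ∩ I' := by simp [hII']
  refine ⟨(I ∩ I').erase 0, I \ I', I' \ I, ?_⟩
  rw [insert_erase_inter_union_sdiff h0, inter_comm I I',
    insert_erase_inter_union_sdiff (inter_comm I I' ▸ h0), inter_comm I' I, insert_erase h0]
  have hab := Nat.le_add_right m k
  have hab' := Nat.sub_le m k
  have hn : m + (m + k) = m + k + m := add_comm _ _
  have hn' : m + m = m + k + (m - k) := by omega
  have hnT : m - k + (m + k) = m + k + (m - k) := add_comm _ _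
  refine ⟨card_eq_of_mem_iff hab le_rfl hn hI, card_eq_of_mem_iff hab' hab hn' hI',
    card_eq_of_mem_iff (hab'.trans hab) le_rfl hnT hII', fun x => by rw [hI, Nat.mod_eq_of_lt x.2],
    punctSet_RMcode_of_mem_iff r hab le_rfl hn hI _,
    punctSet_RMcode_of_mem_iff r hab' hab hn' hI' _, rfl,
    punctSet_RMcode_of_mem_iff r (hab'.trans hab) le_rfl hnT hII' _,
    map_puncture_uniformOnFinset_RMcode_of_mem_iff r hab le_rfl hn hI _,
    map_puncture_uniformOnFinset_RMcode_of_mem_iff r hab' hab hn' hI' _⟩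

/-- nesting property of RM codes: inside RM(r, m+k) there are two
puncturing patterns `I = {0} ∪ A ∪ B = {0,…,2^m−1}` and `I' = {0} ∪ A ∪ C'` both of
which yield RM(r,m), whose intersection `{0} ∪ A` has cardinality `2^{m−k}` and yields
RM(r, m−k), and the uniform distribution on RM(r,m+k) induces the uniform distribution
on both punctured codes. -/
theorem stmt_7 (r m k : ℕ) (hrm : r ≤ m) (hk1 : 1 ≤ k) (hkm : k ≤ m) :
    ∃ (A B C' : Finset (Fin (2 ^ (m + k))))
      (hI : (insert (0 : Fin (2 ^ (m + k))) (A ∪ B)).card = 2 ^ m)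
      (hI' : (insert (0 : Fin (2 ^ (m + k))) (A ∪ C')).card = 2 ^ m)
      (hT : ((insert (0 : Fin (2 ^ (m + k))) (A ∪ B))
              ∩ (insert (0 : Fin (2 ^ (m + k))) (A ∪ C'))).card = 2 ^ (m - k)),
      (∀ x : Fin (2 ^ (m + k)),
          x ∈ insert (0 : Fin (2 ^ (m + k))) (A ∪ B) ↔ (x : ℕ) < 2 ^ m)
      ∧ punctSet (RMcode r (m + k)) (insert (0 : Fin (2 ^ (m + k))) (A ∪ B)) hI
          = RMcode r m
      ∧ punctSet (RMcode r (m + k)) (insert (0 : Fin (2 ^ (m + k))) (A ∪ C')) hI'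
          = RMcode r m
      ∧ (insert (0 : Fin (2 ^ (m + k))) (A ∪ B))
            ∩ (insert (0 : Fin (2 ^ (m + k))) (A ∪ C'))
          = insert (0 : Fin (2 ^ (m + k))) A
      ∧ punctSet (RMcode r (m + k))
            ((insert (0 : Fin (2 ^ (m + k))) (A ∪ B))
              ∩ (insert (0 : Fin (2 ^ (m + k))) (A ∪ C'))) hT
          = RMcode r (m - k)
      ∧ Measure.map
            (fun c : Fin (2 ^ (m + k)) → ZMod 2 => fun j : Fin (2 ^ m) =>
              c (((insert (0 : Fin (2 ^ (m + k))) (A ∪ B)).orderIsoOfFin hI j).1))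
            (uniformOnFinset (RMcode r (m + k)))
          = uniformOnFinset (RMcode r m)
      ∧ Measure.map
            (fun c : Fin (2 ^ (m + k)) → ZMod 2 => fun j : Fin (2 ^ m) =>
              c (((insert (0 : Fin (2 ^ (m + k))) (A ∪ C')).orderIsoOfFin hI' j).1))
            (uniformOnFinset (RMcode r (m + k)))
          = uniformOnFinset (RMcode r m) :=
  stmt_7_general r m k hkm
end

section
/- Let X be a random variable taking values in {−1, +1} and let W be any observation of X on the same probability space (i.e., condition on any sub-σ-algebra or random variable W). Define mmse(X|W) := E[(X − E[X|W])²] = 1 − E[E[X|W]²] and BER(X|W) := (1 − E[|E[X|W]|])/2. Then (1 − √(1 − mmse(X|W)))/2 ≤ BER(X|W) ≤ mmse(X|W)/2. -/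
open MeasureTheory ProbabilityTheory

/-! With `Y = E[X | W]`, pulling `Y` out of `E[Y X | W]` gives `E[Y X] = E[Y²]`, so
`mmse = E[X²] - E[Y²] = 1 - E[Y²]`. As `|Y| ≤ 1`, `Y² ≤ |Y|`, which is the upper bound
`BER ≤ mmse / 2`; Jensen's inequality `(E|Y|)² ≤ E[Y²]` is the lower bound. -/

namespace MeasureTheory

variable {Ω : Type*} {m mΩ : MeasurableSpace Ω} {μ : Measure Ω}

lemma integral_condExp_mul_eq_integral_condExp_sq [IsFiniteMeasure μ] {X : Ω → ℝ} (hm : m ≤ mΩ)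
    (hX : MemLp X 2 μ) : ∫ ω, μ[X | m] ω * X ω ∂μ = ∫ ω, μ[X | m] ω ^ 2 ∂μ := by
  have hYX : Integrable (μ[X | m] * X) μ := (hX.condExp one_le_two).integrable_mul hX
  calc ∫ ω, μ[X | m] ω * X ω ∂μ = ∫ ω, μ[μ[X | m] * X | m] ω ∂μ := (integral_condExp hm).symm
    _ = ∫ ω, μ[X | m] ω ^ 2 ∂μ := by
      refine integral_congr_ae ?_
      filter_upwards [condExp_mul_of_stronglyMeasurable_left stronglyMeasurable_condExp hYX
        (hX.integrable one_le_two)] with ω hω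
      rw [hω, Pi.mul_apply, sq]

lemma integral_sub_condExp_sq [IsFiniteMeasure μ] {X : Ω → ℝ} (hm : m ≤ mΩ)
    (hX : MemLp X 2 μ) :
    ∫ ω, (X ω - μ[X | m] ω) ^ 2 ∂μ = ∫ ω, X ω ^ 2 ∂μ - ∫ ω, μ[X | m] ω ^ 2 ∂μ := by
  have hY := hX.condExp (m := m) one_le_two
  have hYX : Integrable (fun ω => 2 * (μ[X | m] ω * X ω)) μ :=
    (hY.integrable_mul hX).const_mul 2
  calc ∫ ω, (X ω - μ[X | m] ω) ^ 2 ∂μ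
      = ∫ ω, (X ω ^ 2 - 2 * (μ[X | m] ω * X ω) + μ[X | m] ω ^ 2) ∂μ := by
        congr with ω; ring
    _ = ∫ ω, X ω ^ 2 ∂μ - 2 * ∫ ω, μ[X | m] ω * X ω ∂μ + ∫ ω, μ[X | m] ω ^ 2 ∂μ := by
        rw [integral_add (f := fun ω => X ω ^ 2 - 2 * (μ[X | m] ω * X ω))
          (hX.integrable_sq.sub hYX) hY.integrable_sq,
          integral_sub hX.integrable_sq hYX, integral_const_mul]
    _ = ∫ ω, X ω ^ 2 ∂μ - ∫ ω, μ[X | m] ω ^ 2 ∂μ := by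
        rw [integral_condExp_mul_eq_integral_condExp_sq hm hX]; ring

lemma integral_sq_le_integral_abs [IsFiniteMeasure μ] {Y : Ω → ℝ} (hY : Integrable Y μ)
    (hY1 : ∀ᵐ ω ∂μ, |Y ω| ≤ 1) : ∫ ω, Y ω ^ 2 ∂μ ≤ ∫ ω, |Y ω| ∂μ := by
  have hpt : ∀ᵐ ω ∂μ, Y ω ^ 2 ≤ |Y ω| := by
    filter_upwards [hY1] with ω hω
    rw [← sq_abs, sq]
    exact mul_le_of_le_one_left (abs_nonneg _) hω
  have hY2 : Integrable (fun ω => Y ω ^ 2) μ :=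
    hY.abs.mono' (hY.aestronglyMeasurable.pow 2) <| by
      filter_upwards [hpt] with ω hω
      rwa [Real.norm_of_nonneg (sq_nonneg _)]
  exact integral_mono_ae hY2 hY.abs hpt

lemma sq_integral_le_integral_sq [IsProbabilityMeasure μ] {Y : Ω → ℝ} (hY : MemLp Y 2 μ) :
    (∫ ω, Y ω ∂μ) ^ 2 ≤ ∫ ω, Y ω ^ 2 ∂μ := by
  have hvar := variance_nonneg Y μ
  rw [variance_eq_sub hY, sub_nonneg] at hvar
  simpa only [Pi.pow_apply] using hvar

end MeasureTheory

/-- For a `{±1}`-valued random variable `X` and any observation `W`,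
`(1 − √(1 − mmse(X|W)))/2 ≤ BER(X|W) ≤ mmse(X|W)/2`. -/
theorem stmt_9 {Ω β : Type*} [MeasurableSpace Ω] [MeasurableSpace β]
    (μ : Measure Ω) [IsProbabilityMeasure μ]
    (X : Ω → ℝ) (hX : Measurable X) (hpm : ∀ ω, X ω = -1 ∨ X ω = 1)
    (W : Ω → β) (hW : Measurable W) :
    (1 - Real.sqrt (1 - mmse μ X W)) / 2 ≤ BER μ X W
      ∧ BER μ X W ≤ mmse μ X W / 2 := by
  have hXabs : ∀ ω, |X ω| = 1 := fun ω => by rcases hpm ω with h | h <;> simp [h]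
  have hX2 : MemLp X 2 μ :=
    .of_bound hX.aestronglyMeasurable 1 (ae_of_all _ fun ω => (hXabs ω).le)
  have hY1 : ∀ᵐ ω ∂μ, |condMean μ X W ω| ≤ 1 :=
    ae_bdd_abs_condExp_of_ae_bdd_abs (ae_of_all _ fun ω => (hXabs ω).le)
  have hmmse : mmse μ X W = 1 - ∫ ω, condMean μ X W ω ^ 2 ∂μ := by
    simp only [mmse, condMean, integral_sub_condExp_sq hW.comap_le hX2, ← sq_abs (X _), hXabs,
      one_pow, integral_const, probReal_univ, smul_eq_mul, mul_one]
  have hle : ∫ ω, condMean μ X W ω ^ 2 ∂μ ≤ ∫ ω, |condMean μ X W ω| ∂μ :=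
    integral_sq_le_integral_abs integrable_condExp hY1
  have hsq : (∫ ω, |condMean μ X W ω| ∂μ) ^ 2 ≤ ∫ ω, condMean μ X W ω ^ 2 ∂μ := by
    simpa only [sq_abs] using sq_integral_le_integral_sq (Y := fun ω => |condMean μ X W ω|)
      (hX2.condExp one_le_two).abs
  rw [BER, hmmse, sub_sub_cancel]
  constructor
  · linarith [Real.abs_le_sqrt hsq, le_abs_self (∫ ω, |condMean μ X W ω| ∂μ)]
  · linarith
end

section
/- Let C ⊆ 𝔽₂^N be a binary linear code and let C_x := {((−1)^{c_0},…,(−1)^{c_{N−1}}) : c ∈ C} ⊆ {±1}^N be its BPSK image. Let X be uniformly distributed on C_x, let Z = (Z_0,…,Z_{N−1}) be a real random vector independent of X with independent components, and let Y = X ⊙ Z (entrywise product). Fix i ∈ {0,…,N−1} and S ⊆ {0,…,N−1}, and let f be a measurable function with f(Y_S) = E[X_i | Y_S] almost surely. Then for every x ∈ C_x, f(Y_S) = x_i · f(x_S ⊙ Y_S) almost surely; in particular, f(Y_S) = X_i · f(Z_S) almost surely. -/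
/-!
Multiplying the input by a codeword `x` preserves the joint law of `(X, Z)`: the uniform law
on the group `C_x` is invariant under translation, and `X` is independent of `Z`. This map
sends `(X_i, Y_S)` to `(x_i X_i, x_S ⊙ Y_S)`. A conditional expectation is determined by the
joint law of the pair, and `y ↦ x_S ⊙ y` is a measurable involution, so it generates the same
σ-algebra; hence `f(x_S ⊙ Y_S) = E[x_i X_i | Y_S] = x_i f(Y_S)`. Since `X ∈ C_x` almost surely
and `X_S ⊙ Y_S = Z_S`, taking `x = X` gives the second claim.
-/

open MeasureTheory ProbabilityTheory

section Bpsk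

variable {N : ℕ} {C : Finset (Fin N → ZMod 2)}

theorem bpsk_add (c c' : Fin N → ZMod 2) : bpsk (c + c') = bpsk c * bpsk c' := by
  funext j
  simp only [bpsk, Pi.add_apply, Pi.mul_apply, ZMod.val_add, ← pow_add]
  exact (neg_one_pow_eq_pow_mod_two _).symm

theorem mem_bpskImage {x : Fin N → ℝ} : x ∈ bpskImage C ↔ ∃ c ∈ C, bpsk c = x :=
  @Finset.mem_image _ _ (Classical.decEq _) bpsk C x

theorem mul_self_of_mem_bpskImage {x : Fin N → ℝ} (hx : x ∈ bpskImage C) : x * x = 1 := by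
  obtain ⟨c, -, rfl⟩ := mem_bpskImage.1 hx
  funext j
  simp [bpsk, ← mul_pow]

theorem mul_mul_cancel_left_of_mem_bpskImage {x : Fin N → ℝ} (hx : x ∈ bpskImage C)
    (j : Fin N) (a : ℝ) : x j * (x j * a) = a := by
  rw [← mul_assoc, ← Pi.mul_apply x x, mul_self_of_mem_bpskImage hx, Pi.one_apply, one_mul]

theorem mul_mem_bpskImage (hadd : ∀ u ∈ C, ∀ v ∈ C, u + v ∈ C) {x a : Fin N → ℝ}
    (hx : x ∈ bpskImage C) (ha : a ∈ bpskImage C) : x * a ∈ bpskImage C := by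
  obtain ⟨c, hc, rfl⟩ := mem_bpskImage.1 hx
  obtain ⟨c', hc', rfl⟩ := mem_bpskImage.1 ha
  exact mem_bpskImage.2 ⟨c + c', hadd c hc c' hc', bpsk_add c c'⟩

theorem bijOn_mul_left_bpskImage (hadd : ∀ u ∈ C, ∀ v ∈ C, u + v ∈ C) {x : Fin N → ℝ}
    (hx : x ∈ bpskImage C) :
    Set.BijOn (x * ·) (bpskImage C : Set (Fin N → ℝ)) (bpskImage C) := by
  have hinv : Function.Involutive (x * ·) := fun a =>
    funext fun j => mul_mul_cancel_left_of_mem_bpskImage hx j (a j)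
  have hmaps : Set.MapsTo (x * ·) (bpskImage C : Set (Fin N → ℝ)) (bpskImage C) :=
    fun a ha => mul_mem_bpskImage hadd hx ha
  exact Set.InvOn.bijOn ⟨fun a _ => hinv a, fun a _ => hinv a⟩ hmaps hmaps

end Bpsk

section Uniform

variable {α : Type*} [MeasurableSpace α]

instance isFiniteMeasure_uniformOnFinset (s : Finset α) : IsFiniteMeasure (uniformOnFinset s) :=
  ⟨lt_of_le_of_lt (by simp [uniformOnFinset]) ENNReal.one_lt_top⟩

theorem map_uniformOnFinset_of_bijOn {s : Finset α} {m : α → α} (hm : Measurable m)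
    (hbij : Set.BijOn m s s) : (uniformOnFinset s).map m = uniformOnFinset s := by
  rw [uniformOnFinset, Measure.map_smul, Measure.map_finset_sum hm.aemeasurable]
  simp only [Measure.map_dirac' hm]
  congr 1
  exact Finset.sum_nbij m hbij.mapsTo hbij.injOn hbij.surjOn fun _ _ => rfl

theorem ae_mem_uniformOnFinset [MeasurableSingletonClass α] (s : Finset α) :
    ∀ᵐ a ∂uniformOnFinset s, a ∈ s := by
  rw [ae_iff, uniformOnFinset, Measure.smul_apply, Measure.finsetSum_apply]
  refine mul_eq_zero_of_right _ (Finset.sum_eq_zero fun a ha => ?_)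
  simp [ha]

end Uniform

theorem map_prodMk_comp_left_eq_of_map_eq {Ω α γ : Type*} {mΩ : MeasurableSpace Ω}
    [MeasurableSpace α] [MeasurableSpace γ] {μ : Measure Ω} {X : Ω → α} {Z : Ω → γ}
    (hX : Measurable X) (hZ : Measurable Z) {ν : Measure α} {ρ : Measure γ} [SFinite ν]
    [SFinite ρ] (hlaw : μ.map (fun ω => (X ω, Z ω)) = ν.prod ρ) {m : α → α}
    (hm : Measurable m) (hν : ν.map m = ν) :
    μ.map (fun ω => (m (X ω), Z ω)) = μ.map (fun ω => (X ω, Z ω)) :=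
  calc μ.map (fun ω => (m (X ω), Z ω)) = (μ.map fun ω => (X ω, Z ω)).map (Prod.map m id) :=
        (Measure.map_map (hm.prodMap measurable_id) (hX.prodMk hZ)).symm
    _ = _ := by rw [hlaw, ← Measure.map_prod_map ν ρ hm measurable_id, hν, Measure.map_id]

section CondMeanLaw

variable {Ω Ω' β E : Type*} {mΩ : MeasurableSpace Ω} {mΩ' : MeasurableSpace Ω'}
  [MeasurableSpace β] [NormedAddCommGroup E] [NormedSpace ℝ E]
  {μ : Measure Ω} {μ' : Measure Ω'}

theorem ProbabilityTheory.IdentDistrib.setIntegral_preimage_eq {γ : Type*} [MeasurableSpace γ]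
    {U : Ω → γ} {U' : Ω' → γ} (h : IdentDistrib U U' μ μ') {G : γ → E}
    (hG : AEStronglyMeasurable G (μ.map U)) {s : Set γ} (hs : MeasurableSet s) :
    ∫ ω in U ⁻¹' s, G (U ω) ∂μ = ∫ ω in U' ⁻¹' s, G (U' ω) ∂μ' := by
  rw [← setIntegral_map hs hG h.aemeasurable_fst, h.map_eq,
    setIntegral_map hs (h.map_eq ▸ hG) h.aemeasurable_snd]

variable [CompleteSpace E] [MeasurableSpace E] [BorelSpace E] [SecondCountableTopology E]

theorem ProbabilityTheory.IdentDistrib.comp_ae_eq_condMean [IsFiniteMeasure μ]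
    [IsFiniteMeasure μ'] {V : Ω → E} {W : Ω → β} {V' : Ω' → E} {W' : Ω' → β}
    (h : IdentDistrib (fun ω => (V ω, W ω)) (fun ω => (V' ω, W' ω)) μ μ')
    (hW : Measurable W) (hW' : Measurable W') {f : β → E} (hf : Measurable f)
    (hcond : (fun ω => f (W ω)) =ᵐ[μ] condMean μ V W) :
    (fun ω => f (W' ω)) =ᵐ[μ'] condMean μ' V' W' := by
  have hint : Integrable V μ ↔ Integrable V' μ' := (h.comp measurable_fst).integrable_iff
  have hfW : IdentDistrib (fun ω => f (W ω)) (fun ω => f (W' ω)) μ μ' :=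
    h.comp (hf.comp measurable_snd)
  by_cases hVint : Integrable V μ
  swap
  · -- Without integrability both conditional expectations are `0`.
    have h0 : (fun ω => f (W ω)) =ᵐ[μ] 0 := by
      simpa only [condMean, condExp_of_not_integrable hVint] using hcond
    rw [condMean, condExp_of_not_integrable (mt hint.2 hVint)]
    exact hfW.ae_snd (measurableSet_singleton 0) h0
  refine ae_eq_condExp_of_forall_setIntegral_eq hW'.comap_le (hint.1 hVint)
    (fun _ _ _ => (hfW.integrable_iff.1 (integrable_condExp.congr hcond.symm)).integrableOn) ?_
    (hf.comp (Measurable.of_comap_le le_rfl)).aestronglyMeasurable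
  rintro _ ⟨B, hB, rfl⟩ -
  calc ∫ ω in W' ⁻¹' B, f (W' ω) ∂μ'
      = ∫ ω in W ⁻¹' B, f (W ω) ∂μ :=
        (h.setIntegral_preimage_eq (hf.comp measurable_snd).aestronglyMeasurable
          (measurable_snd hB)).symm
    _ = ∫ ω in W ⁻¹' B, V ω ∂μ := by
        rw [setIntegral_congr_ae (hW hB) (hcond.mono fun ω h _ => h)]
        exact setIntegral_condExp hW.comap_le hVint ⟨B, hB, rfl⟩
    _ = ∫ ω in W' ⁻¹' B, V' ω ∂μ' :=
        h.setIntegral_preimage_eq measurable_fst.aestronglyMeasurable (measurable_snd hB)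

theorem comp_measurableEquiv_ae_eq_smul_of_identDistrib [IsFiniteMeasure μ] {V : Ω → E}
    {W : Ω → β} (hW : Measurable W) (σ : β ≃ᵐ β) (c : ℝ)
    (h : IdentDistrib (fun ω => (c • V ω, σ (W ω))) (fun ω => (V ω, W ω)) μ μ)
    {f : β → E} (hf : Measurable f) (hcond : (fun ω => f (W ω)) =ᵐ[μ] condMean μ V W) :
    (fun ω => f (σ (W ω))) =ᵐ[μ] fun ω => c • f (W ω) := by
  have hcomap : MeasurableSpace.comap (σ ∘ W) ‹_› = MeasurableSpace.comap W ‹_› := by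
    rw [← MeasurableSpace.comap_comp, σ.measurableEmbedding.comap_eq]
  refine (h.symm.comp_ae_eq_condMean hW (σ.measurable.comp hW) hf hcond).trans ?_
  change μ[fun ω => c • V ω | MeasurableSpace.comap (σ ∘ W) _] =ᵐ[μ] _
  rw [hcomap]
  filter_upwards [condExp_smul c V (MeasurableSpace.comap W ‹_›), hcond] with ω h1 h2
  exact h1.trans (by rw [Pi.smul_apply, h2]; rfl)

end CondMeanLaw

theorem identDistrib_mul_codeword {Ω : Type*} {mΩ : MeasurableSpace Ω} {μ : Measure Ω}
    {N : ℕ} {C : Finset (Fin N → ZMod 2)} (hadd : ∀ u ∈ C, ∀ v ∈ C, u + v ∈ C)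
    {X Z : Ω → Fin N → ℝ} (hX : Measurable X) (hZ : Measurable Z)
    {ρ : Measure (Fin N → ℝ)} [SFinite ρ]
    (hlaw : μ.map (fun ω => (X ω, Z ω)) = (uniformOnFinset (bpskImage C)).prod ρ)
    (i : Fin N) (S : Finset (Fin N)) {x : Fin N → ℝ} (hx : x ∈ bpskImage C) :
    IdentDistrib (fun ω => (x i * X ω i, fun j : S => x j.1 * (X ω j.1 * Z ω j.1)))
      (fun ω => (X ω i, fun j : S => X ω j.1 * Z ω j.1)) μ μ := by
  have hcodeword : IdentDistrib (fun ω => (x * X ω, Z ω)) (fun ω => (X ω, Z ω)) μ μ :=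
    ⟨by fun_prop, by fun_prop, map_prodMk_comp_left_eq_of_map_eq hX hZ hlaw (by fun_prop)
      (map_uniformOnFinset_of_bijOn (by fun_prop) (bijOn_mul_left_bpskImage hadd hx))⟩
  simpa only [Function.comp_def, Pi.mul_apply, mul_assoc] using
    hcodeword.comp (u := fun p => (p.1 i, fun j : S => p.1 j.1 * p.2 j.1)) (by fun_prop)

theorem stmt_11_general {Ω : Type*} [MeasurableSpace Ω] (μ : Measure Ω) [IsProbabilityMeasure μ]
    (N : ℕ) (C : Finset (Fin N → ZMod 2))
    (hadd : ∀ u ∈ C, ∀ v ∈ C, u + v ∈ C)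
    (X Z : Ω → (Fin N → ℝ)) (hX : Measurable X) (hZ : Measurable Z)
    (hlaw : Measure.map (fun ω => (X ω, Z ω)) μ
        = (uniformOnFinset (bpskImage C)).prod
            (Measure.pi fun i => Measure.map (fun ω => Z ω i) μ))
    (i : Fin N) (S : Finset (Fin N))
    (f : ({x // x ∈ S} → ℝ) → ℝ) (hf : Measurable f)
    (hcond : (fun ω => f (fun j => X ω j.1 * Z ω j.1)) =ᵐ[μ]
        condMean μ (fun ω => X ω i)
          (fun ω => fun j : {x // x ∈ S} => X ω j.1 * Z ω j.1)) :
    (∀ x ∈ bpskImage C,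
        (fun ω => f (fun j => X ω j.1 * Z ω j.1)) =ᵐ[μ]
          fun ω => x i * f (fun j => x j.1 * (X ω j.1 * Z ω j.1)))
    ∧ (fun ω => f (fun j => X ω j.1 * Z ω j.1)) =ᵐ[μ]
        fun ω => X ω i * f (fun j => Z ω j.1) := by
  set W : Ω → ({x // x ∈ S} → ℝ) := fun ω j => X ω j.1 * Z ω j.1
  have hW : Measurable W := by fun_prop
  have hsymm : ∀ x ∈ bpskImage C,
      (fun ω => f (W ω)) =ᵐ[μ] fun ω => x i * f (fun j => x j.1 * W ω j) := by
    intro x hx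
    let σ : ({x // x ∈ S} → ℝ) ≃ᵐ ({x // x ∈ S} → ℝ) :=
      MeasurableEquiv.ofInvolutive (fun y j => x j.1 * y j)
        (fun y => funext fun j => mul_mul_cancel_left_of_mem_bpskImage hx j (y j)) (by fun_prop)
    filter_upwards [comp_measurableEquiv_ae_eq_smul_of_identDistrib hW σ (x i)
      (identDistrib_mul_codeword hadd hX hZ hlaw i S hx) hf hcond] with ω hω
    change f (W ω) = x i * f (σ (W ω))
    rw [hω, smul_eq_mul, mul_mul_cancel_left_of_mem_bpskImage hx]
  have hXmem : ∀ᵐ ω ∂μ, X ω ∈ bpskImage C := by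
    refine ae_of_ae_map (p := fun p => p.1 ∈ bpskImage C) (hX.prodMk hZ).aemeasurable ?_
    rw [hlaw]
    exact Measure.quasiMeasurePreserving_fst.ae (ae_mem_uniformOnFinset _)
  refine ⟨hsymm, ?_⟩
  filter_upwards [(Filter.eventually_all_finset _).2 hsymm, hXmem] with ω hall hω
  rw [hall (X ω) hω]
  congr 2
  exact funext fun j => mul_mul_cancel_left_of_mem_bpskImage hω j.1 (Z ω j.1)

/-- For a binary linear code with BPSK image `C_x`, input `X` uniform on
`C_x`, and a BMS channel `Y = X ⊙ Z` with independent noise components, the conditional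
mean `f(Y_S) = E[X_i | Y_S]` satisfies `f(Y_S) = x_i · f(x_S ⊙ Y_S)` a.s. for every
codeword `x ∈ C_x`, and in particular `f(Y_S) = X_i · f(Z_S)` a.s. -/
theorem stmt_11 {Ω : Type*} [MeasurableSpace Ω] (μ : Measure Ω) [IsProbabilityMeasure μ]
    (N : ℕ) (C : Finset (Fin N → ZMod 2))
    (h0 : (0 : Fin N → ZMod 2) ∈ C)
    (hadd : ∀ u ∈ C, ∀ v ∈ C, u + v ∈ C)
    (X Z : Ω → (Fin N → ℝ)) (hX : Measurable X) (hZ : Measurable Z)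
    (hlaw : Measure.map (fun ω => (X ω, Z ω)) μ
        = (uniformOnFinset (bpskImage C)).prod
            (Measure.pi fun i => Measure.map (fun ω => Z ω i) μ))
    (i : Fin N) (S : Finset (Fin N))
    (f : ({x // x ∈ S} → ℝ) → ℝ) (hf : Measurable f)
    (hcond : (fun ω => f (fun j => X ω j.1 * Z ω j.1)) =ᵐ[μ]
        condMean μ (fun ω => X ω i)
          (fun ω => fun j : {x // x ∈ S} => X ω j.1 * Z ω j.1)) :
    (∀ x ∈ bpskImage C,
        (fun ω => f (fun j => X ω j.1 * Z ω j.1)) =ᵐ[μ]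
          fun ω => x i * f (fun j => x j.1 * (X ω j.1 * Z ω j.1)))
    ∧ (fun ω => f (fun j => X ω j.1 * Z ω j.1)) =ᵐ[μ]
        fun ω => X ω i * f (fun j => Z ω j.1) :=
  stmt_11_general μ N C hadd X Z hX hZ hlaw i S f hf hcond
end

section
/- Let X be a {−1,+1}-valued random variable and let Y_s and Y_t be two observations of X on the same probability space such that X − Y_s − Y_t forms a Markov chain (i.e., E[X | Y_s, Y_t] = E[X | Y_s] almost surely). Define H(X|W) := E[ h_b( (1 + E[X|W])/2 ) ] and mmse(X|W) := 1 − E[ (E[X|W])² ]. Then mmse(X | Y_t) − mmse(X | Y_s) ≤ 2·ln(2)·( H(X | Y_t) − H(X | Y_s) ). -/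
open MeasureTheory ProbabilityTheory

/-! With `U = E[X | Y_s]`, degradedness and the tower property give `E[X | Y_t] = E[U | Y_t]`.
In nats, `G(x) = h((1 + x) / 2) + x² / 2` has `G''(x) = 1 - 1 / (1 - x²) ≤ 0` on `(-1, 1)`, so the
conditional Jensen inequality gives `E[G(U)] ≤ E[G(E[U | Y_t])]`; this rearranges to the claim
since `h_b = h / ln 2`. -/

open Real Set

lemma hb_eq_binEntropy_div_log_two (p : ℝ) : hb p = binEntropy p / log 2 := by
  simp only [hb, binEntropy, logb, log_inv]
  ring

noncomputable def binEntropyAddHalfSq (x : ℝ) : ℝ := binEntropy ((1 + x) / 2) + x ^ 2 / 2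

lemma continuous_binEntropyAddHalfSq : Continuous binEntropyAddHalfSq := by
  unfold binEntropyAddHalfSq
  fun_prop

lemma concaveOn_binEntropyAddHalfSq : ConcaveOn ℝ (Icc (-1) 1) binEntropyAddHalfSq := by
  refine concaveOn_of_hasDerivWithinAt2_nonpos (convex_Icc _ _)
    continuous_binEntropyAddHalfSq.continuousOn
    (f' := fun x => (log (1 - (1 + x) / 2) - log ((1 + x) / 2)) * (1 / 2) + x)
    (f'' := fun x => ((1 - (1 + x) / 2)⁻¹ * (-(1 / 2)) - ((1 + x) / 2)⁻¹ * (1 / 2)) * (1 / 2) + 1)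
    ?_ ?_ ?_ <;> rw [interior_Icc] <;> rintro x ⟨hx₁, hx₂⟩
  · have hp₀ : (1 + x) / 2 ≠ 0 := by linarith
    have hp₁ : (1 + x) / 2 ≠ 1 := by linarith
    have hlin : HasDerivAt (fun y : ℝ => (1 + y) / 2) (1 / 2) x := by
      simpa using ((hasDerivAt_id x).const_add 1).div_const 2
    exact (((hasDerivAt_binEntropy hp₀ hp₁).comp x hlin).add
      (by simpa using (hasDerivAt_pow 2 x).div_const 2)).hasDerivWithinAt
  · have hlin : HasDerivAt (fun y : ℝ => (1 + y) / 2) (1 / 2) x := by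
      simpa using ((hasDerivAt_id x).const_add 1).div_const 2
    have hlin' : HasDerivAt (fun y : ℝ => 1 - (1 + y) / 2) (-(1 / 2)) x := hlin.const_sub 1
    exact ((((hasDerivAt_log (by linarith)).comp x hlin').sub
      ((hasDerivAt_log (by linarith)).comp x hlin)).mul_const (1 / 2)
      |>.add (hasDerivAt_id x)).hasDerivWithinAt
  · have hq : 0 < 1 - x := by linarith
    have hp : 0 < 1 + x := by linarith
    have hsum : 2 ≤ (1 - x)⁻¹ + (1 + x)⁻¹ := by
      rw [inv_add_inv hq.ne' hp.ne', le_div_iff₀ (mul_pos hq hp)]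
      nlinarith [sq_nonneg x]
    have e₁ : (1 - (1 + x) / 2)⁻¹ = 2 * (1 - x)⁻¹ := by
      rw [show 1 - (1 + x) / 2 = (1 - x) / 2 by ring, inv_div, div_eq_mul_inv]
    have e₂ : ((1 + x) / 2)⁻¹ = 2 * (1 + x)⁻¹ := by rw [inv_div, div_eq_mul_inv]
    rw [e₁, e₂]
    linarith

section

variable {α : Type*} {m mα : MeasurableSpace α} {μ : Measure α}

theorem ConcaveOn.integral_comp_le_integral_comp_condExp {E : Type*} [NormedAddCommGroup E]
    [NormedSpace ℝ E] [CompleteSpace E] {f : α → E} {φ : E → ℝ} {s : Set E}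
    (hm : m ≤ mα) [SigmaFinite (μ.trim hm)] (hφ : ConcaveOn ℝ s φ)
    (hφ_cont : UpperSemicontinuousOn φ s) (hs : IsClosed s) (hf : ∀ᵐ a ∂μ, f a ∈ s)
    (hf_int : Integrable f μ) (hφf_int : Integrable (φ ∘ f) μ)
    (hφcf_int : Integrable (φ ∘ μ[f | m]) μ) :
    ∫ a, φ (f a) ∂μ ≤ ∫ a, φ (μ[f | m] a) ∂μ :=
  calc ∫ a, φ (f a) ∂μ = ∫ a, μ[φ ∘ f | m] a ∂μ := (integral_condExp hm).symm
    _ ≤ ∫ a, φ (μ[f | m] a) ∂μ :=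
      integral_mono_ae integrable_condExp hφcf_int
        (hφ.condExp_map_le hm hφ_cont hf hs hf_int hφf_int)

theorem condExp_ae_eq_condExp_condExp_of_le {E : Type*} [NormedAddCommGroup E]
    [NormedSpace ℝ E] [CompleteSpace E] {f : α → E} {m₁ m₂ m₃ : MeasurableSpace α}
    (h₁₃ : m₁ ≤ m₃) (h₃ : m₃ ≤ mα) [SigmaFinite (μ.trim h₃)]
    (hf : μ[f | m₃] =ᵐ[μ] μ[f | m₂]) :
    μ[f | m₁] =ᵐ[μ] μ[μ[f | m₂] | m₁] :=
  (condExp_condExp_of_le h₁₃ h₃).symm.trans (condExp_congr_ae hf)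

theorem integrable_comp_of_ae_mem_isCompact [IsFiniteMeasure μ] {E : Type*}
    [TopologicalSpace E] {f : α → E} {φ : E → ℝ} {K : Set E} (hK : IsCompact K) (hφ : Continuous φ)
    (hf : AEStronglyMeasurable f μ) (hfK : ∀ᵐ a ∂μ, f a ∈ K) :
    Integrable (fun a => φ (f a)) μ := by
  obtain ⟨C, hC⟩ := hK.exists_bound_of_continuousOn hφ.continuousOn
  exact .of_bound (hφ.comp_aestronglyMeasurable hf) C (hfK.mono fun a ha => hC _ ha)

theorem integral_binEntropyAddHalfSq [IsFiniteMeasure μ] {f : α → ℝ}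
    (hf : AEStronglyMeasurable f μ) (hf₁ : ∀ᵐ a ∂μ, f a ∈ Icc (-1) 1) :
    ∫ a, binEntropyAddHalfSq (f a) ∂μ
      = ∫ a, binEntropy ((1 + f a) / 2) ∂μ + (∫ a, f a ^ 2 ∂μ) / 2 := by
  rw [← integral_div, ← integral_add]
  · rfl
  · exact integrable_comp_of_ae_mem_isCompact (φ := fun x => binEntropy ((1 + x) / 2))
      isCompact_Icc (by fun_prop) hf hf₁
  · exact (integrable_comp_of_ae_mem_isCompact (φ := fun x => x ^ 2)
      isCompact_Icc (by fun_prop) hf hf₁).div_const 2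

theorem integral_sq_sub_integral_sq_le_of_ae_eq_condExp [IsFiniteMeasure μ] {f g : α → ℝ}
    (hm : m ≤ mα) (hf_int : Integrable f μ) (hf₁ : ∀ᵐ a ∂μ, f a ∈ Icc (-1) 1)
    (hg : g =ᵐ[μ] μ[f | m]) :
    ∫ a, f a ^ 2 ∂μ - ∫ a, g a ^ 2 ∂μ
      ≤ 2 * (∫ a, binEntropy ((1 + g a) / 2) ∂μ - ∫ a, binEntropy ((1 + f a) / 2) ∂μ) := by
  have hcf₁ : ∀ᵐ a ∂μ, μ[f | m] a ∈ Icc (-1) 1 :=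
    (convex_Icc _ _).condExp_mem hm hf_int isClosed_Icc hf₁
  have hcf : AEStronglyMeasurable (μ[f | m]) μ := integrable_condExp.aestronglyMeasurable
  have jensen := concaveOn_binEntropyAddHalfSq.integral_comp_le_integral_comp_condExp hm
    continuous_binEntropyAddHalfSq.continuousOn.upperSemicontinuousOn isClosed_Icc hf₁ hf_int
    (integrable_comp_of_ae_mem_isCompact (f := f) isCompact_Icc continuous_binEntropyAddHalfSq
      hf_int.aestronglyMeasurable hf₁)
    (integrable_comp_of_ae_mem_isCompact (f := μ[f | m]) isCompact_Icc
      continuous_binEntropyAddHalfSq hcf hcf₁)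
  rw [integral_binEntropyAddHalfSq hf_int.aestronglyMeasurable hf₁,
    integral_binEntropyAddHalfSq hcf hcf₁] at jensen
  have hsq : ∫ a, g a ^ 2 ∂μ = ∫ a, μ[f | m] a ^ 2 ∂μ :=
    integral_congr_ae (hg.fun_comp (· ^ 2))
  have hent : ∫ a, binEntropy ((1 + g a) / 2) ∂μ = ∫ a, binEntropy ((1 + μ[f | m] a) / 2) ∂μ :=
    integral_congr_ae (hg.fun_comp fun x => binEntropy ((1 + x) / 2))
  linarith

end

/-- for `X ∈ {±1}` with degraded observations `X − Y_s − Y_t`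
(expressed by `E[X | Y_s, Y_t] = E[X | Y_s]` a.s.), the difference in MMSE is bounded
by `2 ln 2` times the difference in conditional entropy. -/
theorem stmt_17 {Ω β γ : Type*} [MeasurableSpace Ω] [MeasurableSpace β] [MeasurableSpace γ]
    (μ : Measure Ω) [IsProbabilityMeasure μ]
    (X : Ω → ℝ) (hX : Measurable X) (hpm : ∀ ω, X ω = -1 ∨ X ω = 1)
    (Ys : Ω → β) (Yt : Ω → γ) (hYs : Measurable Ys) (hYt : Measurable Yt)
    (hmarkov : condMean μ X (fun ω => (Ys ω, Yt ω)) =ᵐ[μ] condMean μ X Ys) :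
    (1 - ∫ ω, (condMean μ X Yt ω) ^ 2 ∂μ) - (1 - ∫ ω, (condMean μ X Ys ω) ^ 2 ∂μ)
      ≤ 2 * Real.log 2 *
          ((∫ ω, hb ((1 + condMean μ X Yt ω) / 2) ∂μ)
            - ∫ ω, hb ((1 + condMean μ X Ys ω) / 2) ∂μ) := by
  have hX₁ : ∀ ω, X ω ∈ Icc (-1) 1 := fun ω => by rcases hpm ω with h | h <;> norm_num [h]
  have hX_int : Integrable X μ :=
    .of_bound hX.aestronglyMeasurable 1 (ae_of_all _ fun ω => abs_le.mpr (hX₁ ω))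
  have hYt_le : MeasurableSpace.comap Yt inferInstance
      ≤ MeasurableSpace.comap (fun ω => (Ys ω, Yt ω)) inferInstance :=
    (measurable_snd.comp (comap_measurable fun ω => (Ys ω, Yt ω))).comap_le
  have key := integral_sq_sub_integral_sq_le_of_ae_eq_condExp (f := condMean μ X Ys)
    (g := condMean μ X Yt) hYt.comap_le integrable_condExp
    ((convex_Icc _ _).condExp_mem hYs.comap_le hX_int isClosed_Icc (ae_of_all _ hX₁))
    (condExp_ae_eq_condExp_condExp_of_le hYt_le (hYs.prodMk hYt).comap_le hmarkov)
  simp_rw [hb_eq_binEntropy_div_log_two]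
  rw [integral_div, integral_div]
  field_simp
  linarith
end
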